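/- arXiv:1404.1405 — 8 statements merged into one kernel-verified Lean document; each statement's English description precedes it below -/
import Mathlib

section
/- Let 1/2 ≤ α < 1, 0 ≤ δ < 1, G row-stochastic, W = ((1-α)/(2α))G, and v = (I - δWᵀ)⁻¹𝟏. Then the matrix I - δWᵀ is invertible and Σ_{i=1}^n v_i = 2αn/(2α - δ(1-α)). -/
/-!
`δW` is `δc` times a row-stochastic matrix, where `c = (1 - α)/(2α)` satisfies `|c| < 1` once
`α ≥ 1/2`; hence its `ℓ∞`-operator norm is `|δc| < 1` and the Neumann series inverts
`I - δW = (I - δWᵀ)ᵀ`. Summing the coordinates of `(I - δWᵀ)v = 𝟏` replaces the column sums of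
`Wᵀ` by the row sums `c` of `W`, so `(1 - δc) ∑ vᵢ = n`.
-/

open Matrix BigOperators

namespace Matrix

variable {ι R : Type*} [Fintype ι]

section linftyOp

attribute [local instance] Matrix.linftyOpNormedRing

theorem isUnit_det_one_sub_of_sum_norm_lt_one [DecidableEq ι] [NormedCommRing R] [CompleteSpace R]
    {A : Matrix ι ι R} (h : ∀ i, ∑ j, ‖A i j‖ < 1) : IsUnit (1 - A).det := by
  have hA : ‖A‖ < 1 := by
    rw [linfty_opNorm_def, NNReal.coe_lt_one, Finset.sup_lt_iff zero_lt_one]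
    exact fun i _ => by rw [← NNReal.coe_lt_one]; push_cast; exact h i
  -- The `ℓ∞`-operator norm induces the product uniformity only up to unfolding beyond what
  -- instance search does, so the completeness instance has to be supplied by hand.
  have : HasSummableGeomSeries (Matrix ι ι R) :=
    @instHasSummableGeomSeriesOfCompleteSpace _ _ (inferInstance : CompleteSpace (Matrix ι ι R))
  exact (isUnit_iff_isUnit_det _).mp (isUnit_one_sub_of_norm_lt_one hA)

end linftyOp

theorem sum_norm_smul_apply_of_nonneg {G : Matrix ι ι ℝ} {i : ι} (hG0 : ∀ j, 0 ≤ G i j)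
    (hG1 : ∑ j, G i j = 1) (c : ℝ) : ∑ j, ‖(c • G) i j‖ = |c| := by
  simp only [smul_apply, smul_eq_mul, norm_mul, Real.norm_eq_abs, abs_of_nonneg (hG0 _),
    ← Finset.mul_sum, hG1, mul_one]

theorem one_sub_mul_sum_eq_card_of_one_sub_transpose_mulVec_eq_one [DecidableEq ι] [CommRing R]
    {A : Matrix ι ι R} {c : R} (hA : A *ᵥ 1 = c • 1) {v : ι → R} (hv : (1 - Aᵀ) *ᵥ v = 1) :
    (1 - c) * ∑ i, v i = Fintype.card ι := by
  have h := congrArg (dotProduct 1) hv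
  rw [sub_mulVec, one_mulVec, dotProduct_sub, dotProduct_mulVec, vecMul_transpose, hA] at h
  simpa [sub_mul, dotProduct, Finset.mul_sum] using h

end Matrix

theorem stmt_3_general (n : ℕ) (α δ : ℝ) (hα : 1/2 ≤ α)
    (hδ0 : 0 ≤ δ) (hδ1 : δ < 1)
    (G : Matrix (Fin n) (Fin n) ℝ)
    (hG0 : ∀ i j, 0 ≤ G i j) (hG1 : ∀ i, ∑ j, G i j = 1)
    (W : Matrix (Fin n) (Fin n) ℝ) (hW : W = ((1 - α)/(2*α)) • G)
    (v : Fin n → ℝ) (hv : v = (1 - δ • Wᵀ)⁻¹ *ᵥ (fun _ => 1)) :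
    IsUnit (1 - δ • Wᵀ).det ∧ ∑ i, v i = 2*α*n / (2*α - δ*(1 - α)) := by
  set c := δ * ((1 - α) / (2 * α))
  have hα0 : 0 < α := by linarith
  have hc : |c| < 1 := by
    have h : |(1 - α) / (2 * α)| < 1 := by
      rw [abs_lt, lt_div_iff₀ (by positivity), div_lt_one (by positivity)]
      constructor <;> linarith
    rw [abs_mul, abs_of_nonneg hδ0]
    nlinarith [abs_nonneg ((1 - α) / (2 * α))]
  have hδW : δ • Wᵀ = (c • G)ᵀ := by rw [hW, transpose_smul, smul_smul, transpose_smul]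
  have hunit : IsUnit (1 - δ • Wᵀ).det := by
    rw [hδW, ← transpose_one, ← transpose_sub, det_transpose]
    exact isUnit_det_one_sub_of_sum_norm_lt_one fun i =>
      (sum_norm_smul_apply_of_nonneg (hG0 i) (hG1 i) c).trans_lt hc
  have hrow : (c • G) *ᵥ 1 = c • 1 := by
    ext i; simp [mulVec, dotProduct, ← Finset.mul_sum, hG1 i]
  have hsum : (1 - c) * ∑ i, v i = n := by
    simpa using one_sub_mul_sum_eq_card_of_one_sub_transpose_mulVec_eq_one hrow (v := v) (by
      rw [← hδW, hv, mulVec_mulVec, mul_nonsing_inv _ hunit, one_mulVec]; rfl)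
  have h2c : 2 * α * c = δ * (1 - α) := by simp only [c]; field_simp
  refine ⟨hunit, ?_⟩
  rw [eq_div_iff (by nlinarith)]
  linear_combination (2 * α) * hsum + (∑ i, v i) * h2c

/-- Invertibility of `I - δWᵀ` and the total centrality `∑ vᵢ = 2αn/(2α - δ(1-α))`. -/
theorem stmt_3 (n : ℕ) (α δ : ℝ) (hα : 1/2 ≤ α) (hα1 : α < 1)
    (hδ0 : 0 ≤ δ) (hδ1 : δ < 1)
    (G : Matrix (Fin n) (Fin n) ℝ)
    (hG0 : ∀ i j, 0 ≤ G i j) (hG1 : ∀ i, ∑ j, G i j = 1)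
    (W : Matrix (Fin n) (Fin n) ℝ) (hW : W = ((1 - α)/(2*α)) • G)
    (v : Fin n → ℝ) (hv : v = (1 - δ • Wᵀ)⁻¹ *ᵥ (fun _ => 1)) :
    IsUnit (1 - δ • Wᵀ).det ∧ ∑ i, v i = 2*α*n / (2*α - δ*(1 - α)) :=
  stmt_3_general n α δ hα hδ0 hδ1 G hG0 hG1 W hW v hv
end

section
/- Under the dynamics y(t+1) = W y(t) + u_a with W = ((1-α)/(2α))G, G row-stochastic, u_a = c·𝟏 with c = ((1-α)(q_a-q_b))/(4α(q_a+q_b)), and 0 ≤ δ < 1, 1/2 ≤ α < 1, the discounted sum Σ_{t=0}^∞ δᵗ 𝟏ᵀ(𝟏/2 + y(t)) equals n/(2(1-δ)) + vᵀy(0) + λ(q_a-q_b)/(q_a+q_b), where v = (I - δWᵀ)⁻¹𝟏 and λ = δ(1-α)n / (2(1-δ)(2α - δ(1-α))). -/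
/-!
Let `S = ∑ₜ δᵗ y(t)`; it converges because `W` is `(1-α)/(2α)` times a row-stochastic matrix and
hence a sup-norm contraction, so `y` stays bounded. Shifting the series by one step turns the
recursion into `(1 - δW) S = y(0) + δ/(1-δ) c 𝟏`, and pairing with `v = (1 - δWᵀ)⁻¹ 𝟏` gives
`𝟏ᵀ S = vᵀ y(0) + δ/(1-δ) c ∑ᵢ vᵢ`. Finally `W 𝟏 = (1-α)/(2α) 𝟏` yields
`∑ᵢ vᵢ = 2αn/(2α - δ(1-α))`.
-/

open Matrix BigOperators

namespace Matrix

variable {m : Type*} [Fintype m] [DecidableEq m]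

theorem norm_mulVec_le_of_mem_rowStochastic {G : Matrix m m ℝ} (hG : G ∈ rowStochastic ℝ m)
    (x : m → ℝ) : ‖G *ᵥ x‖ ≤ ‖x‖ := by
  refine (pi_norm_le_iff_of_nonneg (norm_nonneg x)).2 fun i => ?_
  calc ‖(G *ᵥ x) i‖ = |∑ j, G i j * x j| := rfl
    _ ≤ ∑ j, |G i j * x j| := Finset.abs_sum_le_sum_abs _ _
    _ ≤ ∑ j, G i j * ‖x‖ := Finset.sum_le_sum fun j _ => by
        rw [abs_mul, abs_of_nonneg (nonneg_of_mem_rowStochastic hG)]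
        exact mul_le_mul_of_nonneg_left (norm_le_pi_norm x j) (nonneg_of_mem_rowStochastic hG)
    _ = ‖x‖ := by rw [← Finset.sum_mul, sum_row_of_mem_rowStochastic hG, one_mul]

theorem norm_smul_mulVec_le_of_mem_rowStochastic {G : Matrix m m ℝ}
    (hG : G ∈ rowStochastic ℝ m) (β : ℝ) (x : m → ℝ) : ‖(β • G) *ᵥ x‖ ≤ |β| * ‖x‖ := by
  rw [smul_mulVec, norm_smul, Real.norm_eq_abs]
  exact mul_le_mul_of_nonneg_left (norm_mulVec_le_of_mem_rowStochastic hG x) (abs_nonneg β)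

theorem det_one_sub_ne_zero_of_norm_mulVec_le {A : Matrix m m ℝ} {r : ℝ} (hr : r < 1)
    (hA : ∀ x, ‖A *ᵥ x‖ ≤ r * ‖x‖) : (1 - A).det ≠ 0 := by
  intro hdet
  obtain ⟨x, hx0, hx⟩ := exists_mulVec_eq_zero_iff.2 hdet
  have hfix : A *ᵥ x = x := by
    rw [sub_mulVec, one_mulVec, sub_eq_zero] at hx
    exact hx.symm
  have : ‖x‖ ≤ r * ‖x‖ := by simpa only [hfix] using hA x
  exact hx0 (norm_le_zero_iff.1 (by nlinarith [norm_nonneg x]))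

theorem isUnit_det_one_sub_smul_of_mem_rowStochastic {G : Matrix m m ℝ}
    (hG : G ∈ rowStochastic ℝ m) {κ : ℝ} (hκ : |κ| < 1) : IsUnit (1 - κ • G).det :=
  isUnit_iff_ne_zero.2 <|
    det_one_sub_ne_zero_of_norm_mulVec_le hκ (norm_smul_mulVec_le_of_mem_rowStochastic hG κ)

theorem one_sub_smul_mulVec_one_of_mem_rowStochastic {G : Matrix m m ℝ}
    (hG : G ∈ rowStochastic ℝ m) (κ : ℝ) : (1 - κ • G) *ᵥ 1 = (1 - κ) • 1 := by
  rw [sub_mulVec, one_mulVec, smul_mulVec, one_vecMul_of_mem_rowStochastic hG, sub_smul,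
    one_smul]

section CommRing

variable {R : Type*} [CommRing R] {B : Matrix m m R}

theorem inv_transpose_mulVec_one_dotProduct_mulVec (hB : IsUnit B.det) (x : m → R) :
    (Bᵀ⁻¹ *ᵥ 1) ⬝ᵥ (B *ᵥ x) = ∑ i, x i := by
  rw [dotProduct_mulVec, ← mulVec_transpose, mulVec_mulVec,
    mul_nonsing_inv _ (isUnit_det_transpose B hB), one_mulVec, one_dotProduct]

theorem mul_sum_inv_transpose_mulVec_one (hB : IsUnit B.det) {μ : R} (hμ : B *ᵥ 1 = μ • 1) :
    μ * ∑ i, (Bᵀ⁻¹ *ᵥ 1) i = Fintype.card m := by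
  have h := inv_transpose_mulVec_one_dotProduct_mulVec hB 1
  rw [hμ, dotProduct_smul, dotProduct_one, smul_eq_mul] at h
  simpa using h

end CommRing

end Matrix

theorem norm_le_max_of_norm_succ_le {E : Type*} [SeminormedAddGroup E] {y : ℕ → E} {r C : ℝ}
    (hr0 : 0 ≤ r) (hr1 : r < 1) (hy : ∀ t, ‖y (t + 1)‖ ≤ r * ‖y t‖ + C) (t : ℕ) :
    ‖y t‖ ≤ max ‖y 0‖ (C / (1 - r)) := by
  induction t with
  | zero => exact le_max_left _ _
  | succ t ih =>
    have hC : C ≤ (1 - r) * max ‖y 0‖ (C / (1 - r)) := by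
      rw [← div_le_iff₀' (by linarith)]
      exact le_max_right _ _
    nlinarith [hy t, mul_le_mul_of_nonneg_left ih hr0]

theorem summable_pow_smul_of_norm_le {E : Type*} [NormedAddCommGroup E] [NormedSpace ℝ E]
    [CompleteSpace E] {δ M : ℝ} (hδ : |δ| < 1) {y : ℕ → E} (hy : ∀ t, ‖y t‖ ≤ M) :
    Summable fun t => δ ^ t • y t := by
  refine .of_norm_bounded ((summable_geometric_of_lt_one (abs_nonneg δ) hδ).mul_left M)
    fun t => ?_
  rw [norm_smul, norm_pow, Real.norm_eq_abs, mul_comm]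
  exact mul_le_mul_of_nonneg_right (hy t) (pow_nonneg (abs_nonneg δ) t)

section AffineRecursion

variable {m : Type*} [Fintype m] {A : Matrix m m ℝ} {b : m → ℝ} {y : ℕ → m → ℝ} {δ : ℝ}

theorem summable_pow_smul_of_affine_recursion {r : ℝ} (hr0 : 0 ≤ r) (hr1 : r < 1)
    (hA : ∀ x, ‖A *ᵥ x‖ ≤ r * ‖x‖) (hy : ∀ t, y (t + 1) = A *ᵥ y t + b) (hδ : |δ| < 1) :
    Summable fun t => δ ^ t • y t :=
  summable_pow_smul_of_norm_le hδ <| norm_le_max_of_norm_succ_le hr0 hr1 (C := ‖b‖) fun t => by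
    rw [hy]
    exact (norm_add_le _ _).trans (add_le_add (hA _) le_rfl)

theorem one_sub_smul_mulVec_of_hasSum_pow_smul [DecidableEq m] (hy : ∀ t, y (t + 1) = A *ᵥ y t + b)
    (hδ : |δ| < 1) {S : m → ℝ} (hS : HasSum (fun t => δ ^ t • y t) S) :
    (1 - δ • A) *ᵥ S = y 0 + (δ / (1 - δ)) • b := by
  have hA : HasSum (fun t => A *ᵥ (δ ^ t • y t)) (A *ᵥ S) :=
    hS.map (mulVecLin A) (mulVecLin A).continuous_of_finiteDimensional
  have hb : HasSum (fun t => δ ^ t • b) ((1 - δ)⁻¹ • b) :=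
    (hasSum_geometric_of_abs_lt_one hδ).smul_const b
  have hshift : HasSum (fun t => δ ^ (t + 1) • y (t + 1)) (δ • (A *ᵥ S) + (δ / (1 - δ)) • b) := by
    convert (hA.add hb).const_smul δ using 1
    · funext t
      rw [hy, mulVec_smul, pow_succ', mul_smul, smul_add, smul_add]
    · rw [smul_add, smul_smul, div_eq_mul_inv]
  have hS' := (hasSum_nat_add_iff' 1).2 hS
  simp only [Finset.sum_range_one, pow_zero, one_smul] at hS'
  rw [sub_mulVec, one_mulVec, smul_mulVec]
  linear_combination (norm := module) hS'.unique hshift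

theorem hasSum_pow_mul_sum_add (hδ : |δ| < 1) {S : m → ℝ} (hS : HasSum (fun t => δ ^ t • y t) S)
    (a : ℝ) :
    HasSum (fun t => δ ^ t * ∑ i, (a + y t i)) (Fintype.card m * a * (1 - δ)⁻¹ + ∑ i, S i) := by
  have hconst : HasSum (fun t => (Fintype.card m * a : ℝ) * δ ^ t)
      (Fintype.card m * a * (1 - δ)⁻¹) :=
    (hasSum_geometric_of_abs_lt_one hδ).mul_left _
  have hcoord : HasSum (fun t => ∑ i, (δ ^ t • y t) i) (∑ i, S i) :=
    hasSum_sum fun i _ => Pi.hasSum.1 hS i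
  convert hconst.add hcoord using 1
  funext t
  simp [Finset.sum_add_distrib, mul_add, Finset.mul_sum]
  ring

end AffineRecursion

theorem stmt_4_general (n : ℕ) (α δ qa qb : ℝ) (hα : 1/2 ≤ α)
    (hδ0 : 0 ≤ δ) (hδ1 : δ < 1)
    (G : Matrix (Fin n) (Fin n) ℝ)
    (hG0 : ∀ i j, 0 ≤ G i j) (hG1 : ∀ i, ∑ j, G i j = 1)
    (W : Matrix (Fin n) (Fin n) ℝ) (hW : W = ((1 - α)/(2*α)) • G)
    (ua : Fin n → ℝ) (hua : ua = fun _ => ((1 - α)*(qa - qb))/(4*α*(qa + qb)))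
    (y : ℕ → Fin n → ℝ) (hy : ∀ t, y (t + 1) = W *ᵥ y t + ua)
    (v : Fin n → ℝ) (hv : v = (1 - δ • Wᵀ)⁻¹ *ᵥ (fun _ => 1))
    (lam : ℝ) (hlam : lam = δ*(1 - α)*n / (2*(1 - δ)*(2*α - δ*(1 - α)))) :
    ∑' t : ℕ, δ^t * (∑ i, (1/2 + y t i)) =
      n/(2*(1 - δ)) + (∑ i, v i * y 0 i) + lam * (qa - qb)/(qa + qb) := by
  set β := (1 - α) / (2 * α) with hβ
  set c := (1 - α) * (qa - qb) / (4 * α * (qa + qb)) with hc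
  have hG : G ∈ rowStochastic ℝ (Fin n) := mem_rowStochastic_iff_sum.2 ⟨hG0, hG1⟩
  have hβ1 : |β| < 1 := by
    rw [abs_div, abs_of_pos (by linarith : (0:ℝ) < 2 * α), div_lt_one (by linarith)]
    exact abs_lt.2 ⟨by linarith, by linarith⟩
  have hδ : |δ| < 1 := abs_lt.2 ⟨by linarith, hδ1⟩
  have hδβ : |δ * β| < 1 := by
    rw [abs_mul]
    nlinarith [abs_nonneg δ, abs_nonneg β]
  have h2αδ : 2 * α - δ * (1 - α) ≠ 0 := by nlinarith
  have hδW : δ • W = (δ * β) • G := by rw [hW, smul_smul]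
  have hdet := isUnit_det_one_sub_smul_of_mem_rowStochastic hG hδβ
  have hvB : v = (1 - (δ * β) • G)ᵀ⁻¹ *ᵥ 1 := by
    rw [hv, ← hδW, transpose_sub, transpose_one, transpose_smul]
    rfl
  have hsumv : ∑ i, v i = 2 * α * n / (2 * α - δ * (1 - α)) := by
    have h := mul_sum_inv_transpose_mulVec_one hdet
      (one_sub_smul_mulVec_one_of_mem_rowStochastic hG (δ * β))
    rw [← hvB, Fintype.card_fin, hβ] at h
    rw [eq_div_iff h2αδ]
    field_simp at h
    linarith
  obtain ⟨S, hS⟩ := summable_pow_smul_of_affine_recursion (abs_nonneg β) hβ1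
    (hW ▸ norm_smul_mulVec_le_of_mem_rowStochastic hG β) hy hδ
  have hsumS : ∑ i, S i = v ⬝ᵥ y 0 + δ / (1 - δ) * (c * ∑ i, v i) := by
    have hua1 : ua = c • 1 := by
      funext i
      simp [hua]
    rw [← inv_transpose_mulVec_one_dotProduct_mulVec hdet, ← hvB, ← hδW,
      one_sub_smul_mulVec_of_hasSum_pow_smul hy hδ hS, hua1, dotProduct_add, dotProduct_smul,
      dotProduct_smul, dotProduct_one, smul_eq_mul, smul_eq_mul]
  have hρ : c = (1 - α) / (4 * α) * ((qa - qb) / (qa + qb)) := by rw [hc, mul_div_mul_comm]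
  rw [(hasSum_pow_mul_sum_add hδ hS _).tsum_eq, Fintype.card_fin, hsumS, hsumv, hlam, hρ,
    dotProduct, mul_div_assoc _ (qa - qb)]
  generalize (qa - qb) / (qa + qb) = ρ
  field_simp
  ring

/-- The discounted total consumption of product `a` equals
`n/(2(1-δ)) + vᵀ y(0) + λ (q_a - q_b)/(q_a + q_b)`. -/
theorem stmt_4 (n : ℕ) (α δ qa qb : ℝ) (hα : 1/2 ≤ α) (hα1 : α < 1)
    (hδ0 : 0 ≤ δ) (hδ1 : δ < 1) (hqa : 0 < qa) (hqb : 0 < qb)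
    (G : Matrix (Fin n) (Fin n) ℝ)
    (hG0 : ∀ i j, 0 ≤ G i j) (hG1 : ∀ i, ∑ j, G i j = 1)
    (W : Matrix (Fin n) (Fin n) ℝ) (hW : W = ((1 - α)/(2*α)) • G)
    (ua : Fin n → ℝ) (hua : ua = fun _ => ((1 - α)*(qa - qb))/(4*α*(qa + qb)))
    (y : ℕ → Fin n → ℝ) (hy : ∀ t, y (t + 1) = W *ᵥ y t + ua)
    (v : Fin n → ℝ) (hv : v = (1 - δ • Wᵀ)⁻¹ *ᵥ (fun _ => 1))
    (lam : ℝ) (hlam : lam = δ*(1 - α)*n / (2*(1 - δ)*(2*α - δ*(1 - α)))) :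
    ∑' t : ℕ, δ^t * (∑ i, (1/2 + y t i)) =
      n/(2*(1 - δ)) + (∑ i, v i * y 0 i) + lam * (qa - qb)/(qa + qb) :=
  stmt_4_general n α δ qa qb hα hδ0 hδ1 G hG0 hG1 W hW ua hua y hy v hv lam hlam
end

section
/- In a star graph with n ≥ 2 agents where the central agent puts weight 1/(n-1) on each leaf and each leaf puts weight 1 on the center, the centrality vector v = (I - δWᵀ)⁻¹𝟏 with W = ((1-α)/(2α))G satisfies v_center = (1 + δ(1-α)(n-1)/(2α)) / (1 - (δ(1-α)/(2α))²) and v_leaf = (1 + δ(1-α)/(2α(n-1))) / (1 - (δ(1-α)/(2α))²). -/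
open Matrix BigOperators

/-!
Write `G` for the star matrix and `β = δ(1-α)/(2α)`, so that `δ • Wᵀ = β • Gᵀ`. The operator `Gᵀ`
maps a vector that is constant on the leaves to another such vector: the center picks up the sum
over the leaves and every leaf picks up `1/(n-1)` of the center. Hence `(1 - β • Gᵀ) u = 𝟏` reduces
to a `2 × 2` linear system in the center and leaf values, with determinant `1 - β²`; the same
computation shows that `1 - β • Gᵀ` has trivial kernel as soon as `β² ≠ 1`, which holds because
`|β| ≤ |δ|/2 < 1`.
-/

namespace Star

variable {ι : Type*}

lemma card_sub_one_ne_zero [Fintype ι] (hcard : 2 ≤ Fintype.card ι) :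
    (Fintype.card ι : ℝ) - 1 ≠ 0 := by
  have : (2 : ℝ) ≤ Fintype.card ι := by exact_mod_cast hcard
  linarith

variable [DecidableEq ι]

def starVec (c : ι) (center leaf : ℝ) : ι → ℝ := fun i => if i = c then center else leaf

@[simp] lemma starVec_center (c : ι) (a b : ℝ) : starVec c a b c = a := if_pos rfl

@[simp] lemma starVec_of_ne (c : ι) (a b : ℝ) {i : ι} (hi : i ≠ c) : starVec c a b i = b :=
  if_neg hi

lemma starVec_self (c : ι) (a : ℝ) : starVec c a a = fun _ => a := by
  funext i; simp [starVec]

variable [Fintype ι]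

noncomputable def starMatrix (c : ι) : Matrix ι ι ℝ := fun i j =>
  if i = c then (if j = c then 0 else 1 / ((Fintype.card ι : ℝ) - 1))
  else (if j = c then 1 else 0)

lemma starMatrix_transpose_mulVec_center (c : ι) (x : ι → ℝ) :
    ((starMatrix c)ᵀ *ᵥ x) c = ∑ j ∈ Finset.univ.erase c, x j := by
  simp [mulVec, dotProduct, starMatrix, Finset.sum_ite, Finset.filter_ne']

lemma starMatrix_transpose_mulVec_of_ne (c : ι) {i : ι} (hi : i ≠ c) (x : ι → ℝ) :
    ((starMatrix c)ᵀ *ᵥ x) i = x c / ((Fintype.card ι : ℝ) - 1) := by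
  simp [mulVec, dotProduct, starMatrix, hi, div_eq_inv_mul]

lemma sum_erase_const (c : ι) (a : ℝ) :
    ∑ _j ∈ Finset.univ.erase c, a = ((Fintype.card ι : ℝ) - 1) * a := by
  have : 1 ≤ Fintype.card ι := Fintype.card_pos_iff.mpr ⟨c⟩
  rw [Finset.sum_const, Finset.card_erase_of_mem (Finset.mem_univ c), Finset.card_univ,
    nsmul_eq_mul, Nat.cast_sub this, Nat.cast_one]

lemma starMatrix_transpose_mulVec_starVec (c : ι) (a b : ℝ) :
    (starMatrix c)ᵀ *ᵥ starVec c a b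
      = starVec c (((Fintype.card ι : ℝ) - 1) * b) (a / ((Fintype.card ι : ℝ) - 1)) := by
  funext i
  by_cases hi : i = c
  · subst hi
    rw [starMatrix_transpose_mulVec_center, ← sum_erase_const, starVec_center]
    exact Finset.sum_congr rfl fun j hj => starVec_of_ne _ _ _ (Finset.ne_of_mem_erase hj)
  · simp [starMatrix_transpose_mulVec_of_ne c hi, hi]

lemma one_sub_smul_mulVec (β : ℝ) (A : Matrix ι ι ℝ) (x : ι → ℝ) :
    (1 - β • A) *ᵥ x = x - β • (A *ᵥ x) := by
  rw [sub_mulVec, one_mulVec, smul_mulVec]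

lemma isUnit_one_sub_smul_starMatrix_transpose (c : ι) (hcard : 2 ≤ Fintype.card ι) {β : ℝ}
    (hβ : β ^ 2 ≠ 1) : IsUnit (1 - β • (starMatrix c)ᵀ) := by
  have hd := card_sub_one_ne_zero hcard
  rw [isUnit_iff_isUnit_det, isUnit_iff_ne_zero, Ne, ← exists_mulVec_eq_zero_iff]
  rintro ⟨x, hx0, hx⟩
  rw [one_sub_smul_mulVec, sub_eq_zero] at hx
  have hxstar : x = starVec c (x c) (β * x c / ((Fintype.card ι : ℝ) - 1)) := by
    funext i
    by_cases hi : i = c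
    · subst hi; simp
    · rw [starVec_of_ne c _ _ hi, congrFun hx i, Pi.smul_apply,
        starMatrix_transpose_mulVec_of_ne c hi, smul_eq_mul, mul_div_assoc]
  -- Going around the star once multiplies the center value by `β²`.
  have hcenter : x c = β ^ 2 * x c := by
    conv_lhs => rw [hx, hxstar, starMatrix_transpose_mulVec_starVec]
    simp only [Pi.smul_apply, starVec_center, smul_eq_mul]
    field_simp
  have hxc : x c = 0 := by
    have : (1 - β ^ 2) * x c = 0 := by linear_combination hcenter
    exact (mul_eq_zero.mp this).resolve_left (sub_ne_zero.mpr (Ne.symm hβ))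
  exact hx0 (by rw [hxstar, hxc, mul_zero, zero_div, starVec_self]; rfl)

theorem inv_one_sub_smul_starMatrix_transpose_mulVec_one (c : ι) (hcard : 2 ≤ Fintype.card ι)
    {β : ℝ} (hβ : β ^ 2 ≠ 1) :
    (1 - β • (starMatrix c)ᵀ)⁻¹ *ᵥ (fun _ => 1)
      = starVec c ((1 + β * ((Fintype.card ι : ℝ) - 1)) / (1 - β ^ 2))
          ((1 + β / ((Fintype.card ι : ℝ) - 1)) / (1 - β ^ 2)) := by
  have hd := card_sub_one_ne_zero hcard
  have hden : 1 - β ^ 2 ≠ 0 := sub_ne_zero.mpr (Ne.symm hβ)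
  let := (isUnit_one_sub_smul_starMatrix_transpose c hcard hβ).invertible
  refine inv_mulVec_eq_vec ?_
  rw [one_sub_smul_mulVec, starMatrix_transpose_mulVec_starVec, ← starVec_self c 1]
  funext i
  by_cases hi : i = c
  · subst hi
    simp only [Pi.sub_apply, Pi.smul_apply, starVec_center, smul_eq_mul]
    field_simp
    ring
  · simp only [Pi.sub_apply, Pi.smul_apply, starVec_of_ne c _ _ hi, smul_eq_mul]
    field_simp
    ring

end Star

open Star in
theorem stmt_6_general (n : ℕ) (hn : 2 ≤ n) (α δ : ℝ) (hα : 1/2 ≤ α)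
    (hδ0 : 0 ≤ δ) (hδ1 : δ < 1)
    (c : Fin n)
    (G : Matrix (Fin n) (Fin n) ℝ)
    (hG : ∀ i j, G i j =
      if i = c then (if j = c then 0 else 1/((n : ℝ) - 1))
      else (if j = c then 1 else 0))
    (W : Matrix (Fin n) (Fin n) ℝ) (hW : W = ((1 - α)/(2*α)) • G)
    (v : Fin n → ℝ) (hv : v = (1 - δ • Wᵀ)⁻¹ *ᵥ (fun _ => 1)) :
    v c = (1 + δ*(1 - α)*((n : ℝ) - 1)/(2*α)) / (1 - (δ*(1 - α)/(2*α))^2) ∧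
    ∀ i, i ≠ c →
      v i = (1 + δ*(1 - α)/(2*α*((n : ℝ) - 1))) / (1 - (δ*(1 - α)/(2*α))^2) := by
  have hGstar : G = starMatrix c := by
    ext i j; rw [hG, starMatrix, Fintype.card_fin]
  have hk : |(1 - α) / (2 * α)| ≤ 1 / 2 := by
    rw [abs_le]
    constructor
    · rw [le_div_iff₀ (by linarith)]; linarith
    · rw [div_le_iff₀ (by linarith)]; linarith
  have hβ : (δ * ((1 - α) / (2 * α))) ^ 2 ≠ 1 := by
    refine ne_of_lt (sq_lt_one_iff_abs_lt_one _ |>.mpr ?_)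
    rw [abs_mul, abs_of_nonneg hδ0]
    nlinarith [abs_nonneg ((1 - α) / (2 * α))]
  have hvstar := inv_one_sub_smul_starMatrix_transpose_mulVec_one c
    (by rwa [Fintype.card_fin]) hβ
  rw [← smul_smul, ← transpose_smul, ← hGstar, ← hW, ← hv, Fintype.card_fin, ← mul_div_assoc]
    at hvstar
  refine ⟨?_, fun i hi => ?_⟩
  · rw [hvstar, starVec_center]; ring
  · rw [hvstar, starVec_of_ne c _ _ hi, div_div]

/-- Centralities in the star graph: the center and the leaves. -/
theorem stmt_6 (n : ℕ) (hn : 2 ≤ n) (α δ : ℝ) (hα : 1/2 ≤ α) (hα1 : α < 1)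
    (hδ0 : 0 ≤ δ) (hδ1 : δ < 1)
    (c : Fin n)
    (G : Matrix (Fin n) (Fin n) ℝ)
    (hG : ∀ i j, G i j =
      if i = c then (if j = c then 0 else 1/((n : ℝ) - 1))
      else (if j = c then 1 else 0))
    (W : Matrix (Fin n) (Fin n) ℝ) (hW : W = ((1 - α)/(2*α)) • G)
    (v : Fin n → ℝ) (hv : v = (1 - δ • Wᵀ)⁻¹ *ᵥ (fun _ => 1)) :
    v c = (1 + δ*(1 - α)*((n : ℝ) - 1)/(2*α)) / (1 - (δ*(1 - α)/(2*α))^2) ∧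
    ∀ i, i ≠ c →
      v i = (1 + δ*(1 - α)/(2*α*((n : ℝ) - 1))) / (1 - (δ*(1 - α)/(2*α))^2) :=
  stmt_6_general n hn α δ hα hδ0 hδ1 c G hG W hW v hv
end

section
/- For any row-stochastic matrix G with zero diagonal, with W = ((1-α)/(2α))G, v = (I - δWᵀ)⁻¹𝟏, v̄ = 2α/(2α - δ(1-α)) and v_h = (1 + δ(1-α)(n-1)/(2α)) / (1 - (δ(1-α)/(2α))²), the maximum centrality satisfies v̄ ≤ max_i v_i ≤ v_h. -/
/-!
Write `a = δ(1 - α)/(2α) ∈ [0, 1)`, so that `v = 1 + a Gᵀ v`. Summing over the rows of the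
row-stochastic `G` gives `(1 - a) ∑ vᵢ = n`, so `v̄ = 1/(1 - a)` is the mean of `v` and some
`vᵢ` is at least `v̄`. A sum over the negative entries of a solution of `x = b + a Gᵀ x` with `b ≥ 0`
shows `x ≥ 0`; this makes `1 - a Gᵀ` invertible and `v` nonnegative. Since `G` has zero diagonal
and entries at most `1`, `vᵢ ≤ 1 + a ∑_{j ≠ i} vⱼ`, i.e. `(1 + a) vᵢ ≤ 1 + a n/(1 - a)`, which
rearranges to `vᵢ ≤ v_h`.
-/

open Matrix BigOperators Finset

section Substochastic

variable {ι : Type*} [Fintype ι] {P : Matrix ι ι ℝ} {a : ℝ}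

theorem sum_vecMul_eq_sum_mul_rowSum (x : ι → ℝ) (s : Finset ι) :
    ∑ i ∈ s, (x ᵥ* P) i = ∑ j, x j * ∑ i ∈ s, P j i := by
  simp only [vecMul, dotProduct, mul_sum]
  exact sum_comm

theorem sum_vecMul_of_rowSum_eq_one (hP1 : ∀ i, ∑ j, P i j = 1) (x : ι → ℝ) :
    ∑ i, (x ᵥ* P) i = ∑ i, x i := by
  simp only [sum_vecMul_eq_sum_mul_rowSum, hP1, mul_one]

/-- The mass of `x` on its negative entries is `T < 0`, but the equation forces `T ≥ a T`. -/
theorem nonneg_of_eq_add_smul_vecMul (hP0 : ∀ i j, 0 ≤ P i j) (hP1 : ∀ i, ∑ j, P i j ≤ 1)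
    (ha0 : 0 ≤ a) (ha1 : a < 1) {b x : ι → ℝ} (hb : 0 ≤ b) (hx : x = b + a • (x ᵥ* P)) :
    0 ≤ x := by
  by_contra hneg
  set N := univ.filter (fun i => x i < 0)
  have hN : N.Nonempty := by
    simpa [N, Finset.Nonempty, Pi.le_def] using hneg
  set T := ∑ i ∈ N, x i
  have hT : T < 0 := sum_neg (fun i hi => (mem_filter.1 hi).2) hN
  have hflow : T ≤ ∑ i ∈ N, (x ᵥ* P) i := by
    rw [sum_vecMul_eq_sum_mul_rowSum]
    calc T ≤ ∑ j ∈ N, x j * ∑ i ∈ N, P j i := by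
          refine sum_le_sum fun j hj => ?_
          have hxj : x j < 0 := (mem_filter.1 hj).2
          have hmass : ∑ i ∈ N, P j i ≤ 1 :=
            (sum_le_sum_of_subset_of_nonneg (subset_univ N) fun i _ _ => hP0 j i).trans (hP1 j)
          nlinarith
      _ ≤ ∑ j, x j * ∑ i ∈ N, P j i := by
          refine sum_le_sum_of_subset_of_nonneg (subset_univ N) fun j _ hj => ?_
          have hxj : 0 ≤ x j := not_lt.1 fun h => hj (mem_filter.2 ⟨mem_univ j, h⟩)
          exact mul_nonneg hxj (sum_nonneg fun i _ => hP0 j i)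
  have hself : a * T ≤ T :=
    calc a * T ≤ ∑ i ∈ N, (b i + a * (x ᵥ* P) i) := by
          rw [sum_add_distrib, ← mul_sum]
          linarith [sum_nonneg fun i (_ : i ∈ N) => hb i, mul_le_mul_of_nonneg_left hflow ha0]
      _ = T := sum_congr rfl fun i _ => (congrFun hx i).symm
  nlinarith

theorem one_sub_smul_transpose_mulVec [DecidableEq ι] (x : ι → ℝ) :
    (1 - a • Pᵀ) *ᵥ x = x - a • (x ᵥ* P) := by
  rw [sub_mulVec, one_mulVec, smul_mulVec, mulVec_transpose]

theorem det_one_sub_smul_transpose_ne_zero [DecidableEq ι] (hP0 : ∀ i j, 0 ≤ P i j)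
    (hP1 : ∀ i, ∑ j, P i j ≤ 1) (ha0 : 0 ≤ a) (ha1 : a < 1) : (1 - a • Pᵀ).det ≠ 0 := by
  rintro hdet
  obtain ⟨x, hx0, hx⟩ := exists_mulVec_eq_zero_iff.2 hdet
  rw [one_sub_smul_transpose_mulVec, sub_eq_zero] at hx
  have hpos : 0 ≤ x := nonneg_of_eq_add_smul_vecMul hP0 hP1 ha0 ha1 le_rfl (by rw [zero_add]; exact hx)
  have hneg : 0 ≤ -x := nonneg_of_eq_add_smul_vecMul hP0 hP1 ha0 ha1 le_rfl
    (by rw [neg_vecMul, smul_neg, ← hx, zero_add])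
  exact hx0 (le_antisymm (neg_nonneg.1 hneg) hpos)

/-- Bonacich centrality with decay `a` in the network `P`: the solution of `v = 1 + a Pᵀ v`. -/
noncomputable def bonacich [DecidableEq ι] (a : ℝ) (P : Matrix ι ι ℝ) : ι → ℝ :=
  (1 - a • Pᵀ)⁻¹ *ᵥ fun _ => 1

variable [DecidableEq ι]

theorem bonacich_eq (hP0 : ∀ i j, 0 ≤ P i j) (hP1 : ∀ i, ∑ j, P i j ≤ 1) (ha0 : 0 ≤ a)
    (ha1 : a < 1) : bonacich a P = 1 + a • (bonacich a P ᵥ* P) := by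
  have hunit : IsUnit (1 - a • Pᵀ).det :=
    isUnit_iff_ne_zero.2 (det_one_sub_smul_transpose_ne_zero hP0 hP1 ha0 ha1)
  have h : (1 - a • Pᵀ) *ᵥ bonacich a P = 1 := by
    rw [bonacich, mulVec_mulVec, mul_nonsing_inv _ hunit, one_mulVec]
    rfl
  rwa [one_sub_smul_transpose_mulVec, sub_eq_iff_eq_add] at h

theorem bonacich_nonneg (hP0 : ∀ i j, 0 ≤ P i j) (hP1 : ∀ i, ∑ j, P i j ≤ 1) (ha0 : 0 ≤ a)
    (ha1 : a < 1) : 0 ≤ bonacich a P :=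
  nonneg_of_eq_add_smul_vecMul hP0 hP1 ha0 ha1 zero_le_one (bonacich_eq hP0 hP1 ha0 ha1)

theorem one_sub_mul_sum_bonacich (hP0 : ∀ i j, 0 ≤ P i j) (hP1 : ∀ i, ∑ j, P i j = 1)
    (ha0 : 0 ≤ a) (ha1 : a < 1) : (1 - a) * ∑ i, bonacich a P i = Fintype.card ι := by
  have h := congrArg (fun x => ∑ i, x i) (bonacich_eq hP0 (fun i => (hP1 i).le) ha0 ha1)
  simp only [Pi.add_apply, Pi.one_apply, Pi.smul_apply, smul_eq_mul, sum_add_distrib,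
    ← mul_sum, sum_vecMul_of_rowSum_eq_one hP1, sum_const, card_univ, nsmul_one] at h
  linarith

theorem exists_inv_one_sub_le_bonacich [Nonempty ι] (hP0 : ∀ i j, 0 ≤ P i j)
    (hP1 : ∀ i, ∑ j, P i j = 1) (ha0 : 0 ≤ a) (ha1 : a < 1) :
    ∃ i, (1 - a)⁻¹ ≤ bonacich a P i := by
  have hsum : ∑ _i : ι, (1 - a)⁻¹ = ∑ i, bonacich a P i := by
    rw [sum_const, card_univ, nsmul_eq_mul, ← one_sub_mul_sum_bonacich hP0 hP1 ha0 ha1,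
      mul_comm (1 - a), mul_assoc, mul_inv_cancel₀ (sub_ne_zero.2 ha1.ne'), mul_one]
  obtain ⟨i, -, hi⟩ := exists_le_of_sum_le univ_nonempty hsum.le
  exact ⟨i, hi⟩

theorem vecMul_apply_le_sum_sub {x : ι → ℝ} (hx : 0 ≤ x) (hP0 : ∀ i j, 0 ≤ P i j)
    (hP1 : ∀ i, ∑ j, P i j ≤ 1) (hdiag : ∀ i, P i i = 0) (i : ι) :
    (x ᵥ* P) i ≤ ∑ j, x j - x i := by
  have hle : ∀ j, P j i ≤ 1 := fun j =>
    (single_le_sum (fun k _ => hP0 j k) (mem_univ i)).trans (hP1 j)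
  calc (x ᵥ* P) i = ∑ j ∈ univ.erase i, x j * P j i := by
        rw [sum_erase _ (by rw [hdiag, mul_zero])]
        rfl
    _ ≤ ∑ j ∈ univ.erase i, x j := sum_le_sum fun j _ => mul_le_of_le_one_right (hx j) (hle j)
    _ = ∑ j, x j - x i := sum_erase_eq_sub (mem_univ i)

theorem bonacich_le (hP0 : ∀ i j, 0 ≤ P i j) (hP1 : ∀ i, ∑ j, P i j = 1)
    (hdiag : ∀ i, P i i = 0) (ha0 : 0 ≤ a) (ha1 : a < 1) (i : ι) :
    bonacich a P i ≤ (1 + a * (Fintype.card ι - 1)) / (1 - a ^ 2) := by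
  have hP1' : ∀ i, ∑ j, P i j ≤ 1 := fun i => (hP1 i).le
  have hS := one_sub_mul_sum_bonacich hP0 hP1 ha0 ha1
  have hvi : bonacich a P i = 1 + a * (bonacich a P ᵥ* P) i :=
    congrFun (bonacich_eq hP0 hP1' ha0 ha1) i
  have hflow := vecMul_apply_le_sum_sub (bonacich_nonneg hP0 hP1' ha0 ha1) hP0 hP1' hdiag i
  have hkey : (1 + a) * bonacich a P i ≤ 1 + a * ∑ j, bonacich a P j := by
    nlinarith [mul_le_mul_of_nonneg_left hflow ha0]
  rw [le_div_iff₀ (by nlinarith)]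
  nlinarith [mul_le_mul_of_nonneg_left hkey (sub_nonneg.2 ha1.le)]

end Substochastic

/-- For any row-stochastic graph with zero diagonal, the maximum centrality lies
between the balanced-graph centrality `v̄` and the star-center centrality `v_h`. -/
theorem stmt_7 (n : ℕ) (hn : 2 ≤ n) (α δ : ℝ) (hα : 1/2 ≤ α) (hα1 : α < 1)
    (hδ0 : 0 ≤ δ) (hδ1 : δ < 1)
    (G : Matrix (Fin n) (Fin n) ℝ)
    (hG0 : ∀ i j, 0 ≤ G i j) (hG1 : ∀ i, ∑ j, G i j = 1)
    (hGdiag : ∀ i, G i i = 0)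
    (W : Matrix (Fin n) (Fin n) ℝ) (hW : W = ((1 - α)/(2*α)) • G)
    (v : Fin n → ℝ) (hv : v = (1 - δ • Wᵀ)⁻¹ *ᵥ (fun _ => 1))
    (vbar vh : ℝ) (hvbar : vbar = 2*α / (2*α - δ*(1 - α)))
    (hvh : vh = (1 + δ*(1 - α)*((n : ℝ) - 1)/(2*α)) / (1 - (δ*(1 - α)/(2*α))^2)) :
    (∃ i, vbar ≤ v i) ∧ (∀ i, v i ≤ vh) := by
  have : Nonempty (Fin n) := ⟨⟨0, by omega⟩⟩
  set a := δ * ((1 - α) / (2 * α)) with ha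
  have h2α : 0 < 2 * α := by linarith
  have hden : 0 < 2 * α - δ * (1 - α) := by nlinarith
  have ha0 : 0 ≤ a := mul_nonneg hδ0 (div_nonneg (by linarith) h2α.le)
  have ha1 : a < 1 := by
    rw [ha, mul_div_assoc', div_lt_one h2α]
    linarith
  have hva : v = bonacich a G := by
    rw [hv, hW, transpose_smul, smul_smul]
    rfl
  have hvbara : vbar = (1 - a)⁻¹ := by
    rw [hvbar, ha]
    field_simp
  have hvha : vh = (1 + a * (Fintype.card (Fin n) - 1)) / (1 - a ^ 2) := by
    rw [hvh, Fintype.card_fin, ha]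
    ring
  subst hva hvbara hvha
  exact ⟨exists_inv_one_sub_le_bonacich hG0 hG1 ha0 ha1, bonacich_le hG0 hG1 hGdiag ha0 ha1⟩
end

section
/- If the seeding threshold satisfies v_c^a < v̄ = 2α/(2α - δ(1-α)) (i.e., the balanced graph has nonzero seeding capacity), then for every row-stochastic G there exists an agent i with v_i > v_c^a (i.e., every graph has nonzero seeding capacity). -/
/-!
With `M = δ • W`, the matrix `1 - Mᵀ` is strictly diagonally dominant, hence invertible, and every
column of it sums to `1 - r`, where `r = δ (1 - α) / (2α) < 1` is the common row sum of `M`.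
Summing the equations `(1 - Mᵀ) v = 𝟏` therefore gives `(1 - r) ∑ᵢ vᵢ = n`: the mean centrality is
`1 / (1 - r) = 2α / (2α - δ (1 - α))` for every row-stochastic `G`, and some `vᵢ` is at least
the mean.
-/

open Matrix

namespace Matrix

variable {ι : Type*} [Fintype ι] [DecidableEq ι]

theorem det_one_sub_ne_zero_of_sum_norm_lt_one {K : Type*} [NormedField K] {M : Matrix ι ι K}
    (h : ∀ i, ∑ j, ‖M i j‖ < 1) : (1 - M).det ≠ 0 := by
  refine det_ne_zero_of_sum_row_lt_diag fun k => ?_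
  have hoff : ∀ j ∈ Finset.univ.erase k, ‖(1 - M) k j‖ = ‖M k j‖ := fun j hj => by
    rw [sub_apply, one_apply_ne' (Finset.ne_of_mem_erase hj), zero_sub, norm_neg]
  have hdiag : 1 - ‖M k k‖ ≤ ‖(1 - M) k k‖ := by
    simpa only [sub_apply, one_apply_eq, norm_one] using norm_sub_norm_le (1 : K) (M k k)
  have hsplit := Finset.sum_erase_add Finset.univ (fun j => ‖M k j‖) (Finset.mem_univ k)
  rw [Finset.sum_congr rfl hoff]
  linarith [h k]

theorem sum_inv_one_sub_transpose_mulVec_one {M : Matrix ι ι ℝ} {r : ℝ}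
    (hM : ∀ i j, 0 ≤ M i j) (hrow : ∀ i, ∑ j, M i j = r) (hr : r < 1) :
    ∑ i, ((1 - Mᵀ)⁻¹ *ᵥ fun _ => 1) i = Fintype.card ι / (1 - r) := by
  set v := (1 - Mᵀ)⁻¹ *ᵥ fun _ => (1 : ℝ)
  have hdet : (1 - Mᵀ).det ≠ 0 := by
    rw [← transpose_one, ← transpose_sub, det_transpose]
    refine det_one_sub_ne_zero_of_sum_norm_lt_one fun i => ?_
    simpa only [Real.norm_of_nonneg (hM i _), hrow i] using hr
  have hsolve : (1 - Mᵀ) *ᵥ v = fun _ => 1 := by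
    rw [mulVec_mulVec, mul_nonsing_inv _ (isUnit_iff_ne_zero.mpr hdet), one_mulVec]
  have hcol : (1 : ι → ℝ) ᵥ* (1 - Mᵀ) = fun _ => 1 - r := by
    ext j
    simp only [vecMul, dotProduct, Pi.one_apply, one_mul, sub_apply, transpose_apply,
      Finset.sum_sub_distrib, hrow, Fintype.sum_ite_eq', one_apply]
  have hsum : (1 - r) * ∑ i, v i = Fintype.card ι := by
    have := dotProduct_mulVec (1 : ι → ℝ) (1 - Mᵀ) v
    rw [hsolve, hcol] at this
    simpa [dotProduct, Finset.mul_sum] using this.symm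
  rw [eq_div_iff (by linarith), mul_comm, hsum]

end Matrix

/-- If the seeding threshold is below the balanced-graph centrality, then every
row-stochastic graph has an agent whose centrality exceeds the threshold. -/
theorem stmt_9 (n : ℕ) (hn : 0 < n) (α δ : ℝ) (hα : 1/2 ≤ α) (hα1 : α < 1)
    (hδ0 : 0 ≤ δ) (hδ1 : δ < 1)
    (vca : ℝ) (hvca : vca < 2*α / (2*α - δ*(1 - α))) :
    ∀ G : Matrix (Fin n) (Fin n) ℝ, (∀ i j, 0 ≤ G i j) → (∀ i, ∑ j, G i j = 1) →
      ∀ W : Matrix (Fin n) (Fin n) ℝ, W = ((1 - α)/(2*α)) • G →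
      ∀ v : Fin n → ℝ, v = (1 - δ • Wᵀ)⁻¹ *ᵥ (fun _ => 1) →
      ∃ i, vca < v i := by
  rintro G hG0 hG1 W rfl v rfl
  set r := δ * ((1 - α) / (2 * α))
  have hc : 0 ≤ (1 - α) / (2 * α) ∧ (1 - α) / (2 * α) ≤ 1 :=
    ⟨div_nonneg (by linarith) (by linarith), by rw [div_le_one (by linarith)]; linarith⟩
  have hr : r < 1 := by nlinarith
  have hmean : 2*α / (2*α - δ*(1 - α)) = 1 / (1 - r) := by
    have hα0 : 2 * α ≠ 0 := by linarith
    rw [div_eq_div_iff (by nlinarith) (by linarith)]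
    simp only [r]
    field_simp
  have hsum := sum_inv_one_sub_transpose_mulVec_one (M := δ • ((1 - α) / (2 * α)) • G) (r := r)
    (fun i j => mul_nonneg hδ0 (mul_nonneg hc.1 (hG0 i j)))
    (fun i => by simp only [Matrix.smul_apply, smul_eq_mul, ← Finset.mul_sum, hG1 i, mul_one, r])
    hr
  rw [transpose_smul, Fintype.card_fin] at hsum
  obtain ⟨i, -, hi⟩ := Finset.exists_lt_of_sum_lt (s := Finset.univ) (f := fun _ => vca) <| by
    rw [hsum, Finset.sum_const, Finset.card_univ, Fintype.card_fin, nsmul_eq_mul, div_eq_mul_one_div]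
    exact mul_lt_mul_of_pos_left (hmean ▸ hvca) (by exact_mod_cast hn)
  exact ⟨i, hi⟩
end

section
/- If the seeding threshold satisfies v_c^a > v_h = (1 + δ(1-α)(n-1)/(2α)) / (1 - (δ(1-α)/(2α))²) (i.e., the star graph has zero seeding capacity), then for every row-stochastic G with zero diagonal and every agent i, v_i < v_c^a (i.e., every graph has zero seeding capacity). -/
open Matrix BigOperators

/-!
Put `q = δ(1-α)/(2α) ∈ [0, 1)`, so that `v = 1 + q Gᵀ v`. Since `G` is row-stochastic, `Gᵀ`
preserves coordinate sums and is nonexpanding in `ℓ¹`; hence `1 - q Gᵀ` is invertible, `v ≥ 0`,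
and summing the equation gives `∑ v = n / (1 - q)`. As `G` has zero diagonal and entries at most
`1`, `v_k ≤ 1 + q (∑ v - v_k)`, which rearranges to `v_k ≤ (1 + q(n-1)) / (1 - q²) = v_h`.
-/

namespace Matrix

variable {ι : Type*} [Fintype ι] {G : Matrix ι ι ℝ} {q : ℝ}

theorem one_sub_smul_mulVec_apply [DecidableEq ι] (A : Matrix ι ι ℝ) (x : ι → ℝ) (k : ι) :
    ((1 - q • A) *ᵥ x) k = x k - q * (A *ᵥ x) k := by
  simp only [sub_mulVec, one_mulVec, smul_mulVec, Pi.sub_apply, Pi.smul_apply, smul_eq_mul]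

theorem sum_transpose_mulVec_of_sum_row_eq_one (hG1 : ∀ i, ∑ j, G i j = 1) (x : ι → ℝ) :
    ∑ k, (Gᵀ *ᵥ x) k = ∑ k, x k := by
  have hG : G *ᵥ 1 = 1 := funext fun i => by simpa [mulVec, dotProduct] using hG1 i
  rw [mulVec_transpose, ← dotProduct_one, ← dotProduct_mulVec, hG, dotProduct_one]

/-- The positive part `y⁺` satisfies the same inequality, and summing it gives `∑ y⁺ ≤ q ∑ y⁺`. -/
theorem nonpos_of_le_smul_transpose_mulVec (hG0 : ∀ i j, 0 ≤ G i j)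
    (hG1 : ∀ i, ∑ j, G i j = 1) (hq0 : 0 ≤ q) (hq1 : q < 1) {y : ι → ℝ}
    (hy : ∀ k, y k ≤ q * (Gᵀ *ᵥ y) k) (k : ι) : y k ≤ 0 := by
  set p : ι → ℝ := fun k => max (y k) 0
  have hp0 : ∀ k, 0 ≤ p k := fun k => le_max_right _ _
  have hp : ∀ k, p k ≤ q * (Gᵀ *ᵥ p) k := by
    intro k
    have hmono : (Gᵀ *ᵥ y) k ≤ (Gᵀ *ᵥ p) k :=
      Finset.sum_le_sum fun j _ => mul_le_mul_of_nonneg_left (le_max_left _ _) (hG0 j k)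
    have hpos : 0 ≤ (Gᵀ *ᵥ p) k :=
      Finset.sum_nonneg fun j _ => mul_nonneg (hG0 j k) (hp0 j)
    exact max_le ((hy k).trans (mul_le_mul_of_nonneg_left hmono hq0)) (mul_nonneg hq0 hpos)
  have hsum : ∑ k, p k ≤ q * ∑ k, p k := by
    calc ∑ k, p k ≤ ∑ k, q * (Gᵀ *ᵥ p) k := Finset.sum_le_sum fun k _ => hp k
      _ = q * ∑ k, p k := by rw [← Finset.mul_sum, sum_transpose_mulVec_of_sum_row_eq_one hG1]
  have hsum0 : ∑ k, p k = 0 :=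
    le_antisymm (by nlinarith) (Finset.sum_nonneg fun k _ => hp0 k)
  have hpk : p k = 0 := (Finset.sum_eq_zero_iff_of_nonneg fun k _ => hp0 k).1 hsum0 k (by simp)
  exact (le_max_left _ _).trans hpk.le

theorem isUnit_det_one_sub_smul_transpose [DecidableEq ι] (hG0 : ∀ i j, 0 ≤ G i j)
    (hG1 : ∀ i, ∑ j, G i j = 1) (hq0 : 0 ≤ q) (hq1 : q < 1) :
    IsUnit (1 - q • Gᵀ).det := by
  refine isUnit_iff_ne_zero.2 fun hdet => ?_
  obtain ⟨x, hx0, hx⟩ := exists_mulVec_eq_zero_iff.2 hdet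
  have hfix : ∀ k, x k = q * (Gᵀ *ᵥ x) k := fun k => by
    have h := congrFun hx k
    rw [one_sub_smul_mulVec_apply, Pi.zero_apply] at h
    linarith
  refine hx0 (funext fun k => le_antisymm ?_ ?_)
  · exact nonpos_of_le_smul_transpose_mulVec hG0 hG1 hq0 hq1 (fun k => (hfix k).le) k
  · simpa using nonpos_of_le_smul_transpose_mulVec hG0 hG1 hq0 hq1 (y := -x)
      (fun k => by simp only [mulVec_neg, Pi.neg_apply, hfix k]; linarith) k

theorem le_of_eq_one_add_smul_transpose_mulVec (hG0 : ∀ i j, 0 ≤ G i j)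
    (hG1 : ∀ i, ∑ j, G i j = 1) (hGd : ∀ i, G i i = 0) (hq0 : 0 ≤ q) (hq1 : q < 1)
    {v : ι → ℝ} (hv : ∀ k, v k = 1 + q * (Gᵀ *ᵥ v) k) (k : ι) :
    v k ≤ (1 + q * (Fintype.card ι - 1)) / (1 - q ^ 2) := by
  classical
  have hv0 : ∀ j, 0 ≤ v j := fun j => by
    simpa using nonpos_of_le_smul_transpose_mulVec hG0 hG1 hq0 hq1 (y := -v)
      (fun k => by simp only [mulVec_neg, Pi.neg_apply]; linarith [hv k]) j
  set S := ∑ j, v j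
  have hS : S = Fintype.card ι + q * S := by
    calc S = ∑ j, (1 + q * (Gᵀ *ᵥ v) j) := Finset.sum_congr rfl fun j _ => hv j
      _ = Fintype.card ι + q * S := by
        rw [Finset.sum_add_distrib, ← Finset.mul_sum, sum_transpose_mulVec_of_sum_row_eq_one hG1]
        simp only [Finset.sum_const, Finset.card_univ, nsmul_eq_mul, mul_one, S]
  have hGv : (Gᵀ *ᵥ v) k ≤ S - v k := by
    have hle : ∀ j, G j k ≤ 1 := fun j => hG1 j ▸
      Finset.single_le_sum (fun l _ => hG0 j l) (Finset.mem_univ k)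
    calc (Gᵀ *ᵥ v) k = ∑ j ∈ Finset.univ.erase k, G j k * v j := by
          change ∑ j, G j k * v j = _
          rw [← Finset.add_sum_erase _ _ (Finset.mem_univ k), hGd k, zero_mul, zero_add]
      _ ≤ ∑ j ∈ Finset.univ.erase k, v j :=
          Finset.sum_le_sum fun j _ => mul_le_of_le_one_left (hv0 j) (hle j)
      _ = S - v k := by rw [eq_sub_iff_add_eq', Finset.add_sum_erase _ _ (Finset.mem_univ k)]
  rw [le_div_iff₀ (by nlinarith)]
  nlinarith [hv k, mul_le_mul_of_nonneg_left hGv hq0]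

end Matrix

theorem stmt_10_general (n : ℕ) (α δ : ℝ) (hα : 1/2 ≤ α) (hα1 : α < 1)
    (hδ0 : 0 ≤ δ) (hδ1 : δ < 1)
    (vca : ℝ)
    (hvca : (1 + δ*(1 - α)*((n : ℝ) - 1)/(2*α)) / (1 - (δ*(1 - α)/(2*α))^2) < vca) :
    ∀ G : Matrix (Fin n) (Fin n) ℝ, (∀ i j, 0 ≤ G i j) → (∀ i, ∑ j, G i j = 1) →
      (∀ i, G i i = 0) →
      ∀ W : Matrix (Fin n) (Fin n) ℝ, W = ((1 - α)/(2*α)) • G →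
      ∀ v : Fin n → ℝ, v = (1 - δ • Wᵀ)⁻¹ *ᵥ (fun _ => 1) →
      ∀ i, v i < vca := by
  rintro G hG0 hG1 hGd W rfl v hv i
  set q := δ * (1 - α) / (2 * α)
  have hq0 : 0 ≤ q := div_nonneg (mul_nonneg hδ0 (by linarith)) (by linarith)
  have hq1 : q < 1 := (div_lt_one (by linarith)).2 (by nlinarith)
  have hW : δ • (((1 - α) / (2 * α)) • G)ᵀ = q • Gᵀ := by
    rw [transpose_smul, smul_smul, ← mul_div_assoc]
  have hMv : (1 - q • Gᵀ) *ᵥ v = 1 := by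
    rw [hv, hW, mulVec_mulVec,
      mul_nonsing_inv _ (isUnit_det_one_sub_smul_transpose hG0 hG1 hq0 hq1), one_mulVec]
    rfl
  have hfix : ∀ k, v k = 1 + q * (Gᵀ *ᵥ v) k := fun k => by
    have h := congrFun hMv k
    rw [one_sub_smul_mulVec_apply, Pi.one_apply] at h
    linarith
  have hvh : (1 + δ*(1 - α)*((n : ℝ) - 1)/(2*α)) / (1 - (δ*(1 - α)/(2*α))^2)
      = (1 + q * (Fintype.card (Fin n) - 1)) / (1 - q ^ 2) := by
    rw [Fintype.card_fin]; ring
  exact (le_of_eq_one_add_smul_transpose_mulVec hG0 hG1 hGd hq0 hq1 hfix i).trans_lt (hvh ▸ hvca)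

/-- If the seeding threshold exceeds the star-center centrality `v_h`, then no
agent of any row-stochastic graph with zero diagonal can be seeded. -/
theorem stmt_10 (n : ℕ) (hn : 2 ≤ n) (α δ : ℝ) (hα : 1/2 ≤ α) (hα1 : α < 1)
    (hδ0 : 0 ≤ δ) (hδ1 : δ < 1)
    (vca : ℝ)
    (hvca : (1 + δ*(1 - α)*((n : ℝ) - 1)/(2*α)) / (1 - (δ*(1 - α)/(2*α))^2) < vca) :
    ∀ G : Matrix (Fin n) (Fin n) ℝ, (∀ i j, 0 ≤ G i j) → (∀ i, ∑ j, G i j = 1) →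
      (∀ i, G i i = 0) →
      ∀ W : Matrix (Fin n) (Fin n) ℝ, W = ((1 - α)/(2*α)) • G →
      ∀ v : Fin n → ℝ, v = (1 - δ • Wᵀ)⁻¹ *ᵥ (fun _ => 1) →
      ∀ i, v i < vca :=
  stmt_10_general n α δ hα hα1 hδ0 hδ1 vca hvca
end

section
/- For any row-stochastic matrix G and threshold t > 1, the number of agents i with centrality v_i > t is at most ⌊nδ(1-α) / ((t-1)(2α - δ(1-α)))⌋, where v = (I - δWᵀ)⁻¹𝟏 and W = ((1-α)/(2α))G. -/
/-!
Absorb the discount into `B = δ • W`, a nonnegative matrix whose row sums all equal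
`s = δ(1-α)/(2α) < 1`. Then `v = (1 - Bᵀ)⁻¹ 𝟏` is the solution of `v = 𝟏 + v ᵥ* B`.
Summing this equation over the set of negative coordinates shows that set is empty, so
`v ≥ 0` and hence `v ≥ 𝟏`; summing it over all coordinates gives `Σ v = n / (1 - s)`.
The total excess `Σ (v i - 1) = n s / (1 - s)` then bounds the number of agents with excess
above `t - 1`, Markov style.
-/

open Matrix
open scoped Finset

theorem Finset.card_filter_lt_mul_le_sum {ι : Type*} (s : Finset ι) (f : ι → ℝ) (a : ℝ)
    (hf : ∀ i ∈ s, 0 ≤ f i) : (#{i ∈ s | a < f i} : ℝ) * a ≤ ∑ i ∈ s, f i :=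
  calc (#{i ∈ s | a < f i} : ℝ) * a = ∑ _i ∈ s with a < f _i, a := by
        rw [Finset.sum_const, nsmul_eq_mul]
    _ ≤ ∑ i ∈ s with a < f i, f i :=
        Finset.sum_le_sum fun i hi => (Finset.mem_filter.mp hi).2.le
    _ ≤ ∑ i ∈ s, f i :=
        Finset.sum_le_sum_of_subset_of_nonneg (Finset.filter_subset _ _)
          fun i hi _ => hf i hi

namespace Matrix

variable {ι : Type*} [Fintype ι] {B : Matrix ι ι ℝ}

theorem det_one_sub_transpose_ne_zero [DecidableEq ι] (hB : ∀ i j, 0 ≤ B i j)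
    (hrow : ∀ i, ∑ j, B i j < 1) : (1 - Bᵀ).det ≠ 0 := by
  rw [← transpose_one, ← transpose_sub, det_transpose]
  refine det_ne_zero_of_sum_row_lt_diag fun k => ?_
  have hoff : ∀ j ∈ Finset.univ.erase k, ‖(1 - B) k j‖ = B k j := fun j hj => by
    rw [sub_apply, one_apply_ne (Finset.ne_of_mem_erase hj).symm, zero_sub, norm_neg,
      Real.norm_of_nonneg (hB k j)]
  have hdiag : ‖(1 - B) k k‖ = 1 - B k k := by
    have := (Finset.single_le_sum (fun j _ => hB k j) (Finset.mem_univ k)).trans_lt (hrow k)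
    rw [sub_apply, one_apply_eq, Real.norm_of_nonneg (by linarith)]
  rw [Finset.sum_congr rfl hoff, hdiag, Finset.sum_erase_eq_sub (Finset.mem_univ k)]
  linarith [hrow k]

theorem eq_one_add_vecMul_of_eq_inv_mulVec [DecidableEq ι] {v : ι → ℝ}
    (hdet : (1 - Bᵀ).det ≠ 0) (hv : v = (1 - Bᵀ)⁻¹ *ᵥ 1) : v = 1 + v ᵥ* B := by
  have h : (1 - Bᵀ) *ᵥ v = 1 := by
    rw [hv, mulVec_mulVec, mul_nonsing_inv _ hdet.isUnit, one_mulVec]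
  rw [sub_mulVec, one_mulVec, mulVec_transpose, sub_eq_iff_eq_add'] at h
  exact h.trans (add_comm _ _)

/-- Sum `v = 𝟏 + v ᵥ* B` over `S = {i | v i < 0}`: as the row sums are at most `1`, each
`v j < 0` contributes at least `v j` to `Σ_{i ∈ S} (v ᵥ* B) i`, so `Σ_S v ≥ #S + Σ_S v`. -/
theorem nonneg_of_eq_one_add_vecMul {v : ι → ℝ} (hB : ∀ i j, 0 ≤ B i j)
    (hrow : ∀ i, ∑ j, B i j ≤ 1) (hv : v = 1 + v ᵥ* B) : 0 ≤ v := by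
  classical
  set S : Finset ι := {i | v i < 0}
  have hterm : ∀ j, (if j ∈ S then v j else 0) ≤ v j * ∑ i ∈ S, B j i := fun j => by
    have hpart : ∑ i ∈ S, B j i ≤ 1 :=
      (Finset.sum_le_sum_of_subset_of_nonneg (Finset.subset_univ S)
        fun i _ _ => hB j i).trans (hrow j)
    have hpart0 : 0 ≤ ∑ i ∈ S, B j i := Finset.sum_nonneg fun i _ => hB j i
    split_ifs with hj
    · nlinarith [(Finset.mem_filter.mp hj).2]
    · exact mul_nonneg (not_lt.mp fun h => hj (by simp [S, h])) hpart0
  have hsum : ∑ i ∈ S, v i = #S + ∑ i ∈ S, (v ᵥ* B) i := by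
    conv_lhs => rw [hv]
    simp [Finset.sum_add_distrib]
  have hmass : ∑ i ∈ S, v i ≤ ∑ i ∈ S, (v ᵥ* B) i :=
    calc
      ∑ i ∈ S, v i = ∑ j, if j ∈ S then v j else 0 := by
        rw [Finset.sum_ite_mem, Finset.univ_inter]
      _ ≤ ∑ j, v j * ∑ i ∈ S, B j i := Finset.sum_le_sum fun j _ => hterm j
      _ = ∑ i ∈ S, (v ᵥ* B) i := by
        simp only [vecMul, dotProduct, Finset.mul_sum]
        exact Finset.sum_comm
  have hS : S = ∅ :=
    Finset.card_eq_zero.mp (Nat.le_zero.mp (by exact_mod_cast (by linarith : (#S : ℝ) ≤ 0)))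
  exact fun i => not_lt.mp fun hi => by simpa [hS] using (show i ∈ S by simpa [S] using hi)

theorem one_le_of_eq_one_add_vecMul {v : ι → ℝ} (hB : ∀ i j, 0 ≤ B i j)
    (hrow : ∀ i, ∑ j, B i j ≤ 1) (hv : v = 1 + v ᵥ* B) : 1 ≤ v := fun i => by
  have hv0 := nonneg_of_eq_one_add_vecMul hB hrow hv
  rw [hv, Pi.add_apply, le_add_iff_nonneg_right]
  exact Finset.sum_nonneg fun j _ => mul_nonneg (hv0 j) (hB j i)

theorem sum_vecMul_of_sum_row_eq {s : ℝ} (v : ι → ℝ) (hrow : ∀ i, ∑ j, B i j = s) :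
    ∑ i, (v ᵥ* B) i = s * ∑ i, v i := by
  simp only [vecMul, dotProduct, Finset.mul_sum]
  rw [Finset.sum_comm]
  exact Finset.sum_congr rfl fun j _ => by rw [← Finset.mul_sum, hrow, mul_comm]

theorem sum_sub_one_eq_of_eq_one_add_vecMul {s : ℝ} {v : ι → ℝ} (hrow : ∀ i, ∑ j, B i j = s)
    (hs : s ≠ 1) (hv : v = 1 + v ᵥ* B) :
    ∑ i, (v i - 1) = Fintype.card ι * s / (1 - s) := by
  have hexcess : ∑ i, (v i - 1) = s * ∑ i, v i := by
    rw [← sum_vecMul_of_sum_row_eq v hrow]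
    exact Finset.sum_congr rfl fun i _ => by
      rw [sub_eq_iff_eq_add']; exact congrFun hv i
  have hsplit : ∑ i, v i = Fintype.card ι + ∑ i, (v i - 1) := by
    simp [Finset.sum_sub_distrib]
  rw [eq_div_iff (sub_ne_zero.mpr hs.symm)]
  rw [hsplit] at hexcess
  linarith

end Matrix

/-- The number of agents with centrality above a threshold `t > 1` is at most
`⌊nδ(1-α) / ((t-1)(2α - δ(1-α)))⌋`. -/
theorem stmt_12 (n : ℕ) (α δ t : ℝ) (hα : 1/2 ≤ α) (hα1 : α < 1)
    (hδ0 : 0 ≤ δ) (hδ1 : δ < 1) (ht : 1 < t)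
    (G : Matrix (Fin n) (Fin n) ℝ)
    (hG0 : ∀ i j, 0 ≤ G i j) (hG1 : ∀ i, ∑ j, G i j = 1)
    (W : Matrix (Fin n) (Fin n) ℝ) (hW : W = ((1 - α)/(2*α)) • G)
    (v : Fin n → ℝ) (hv : v = (1 - δ • Wᵀ)⁻¹ *ᵥ (fun _ => 1)) :
    (Finset.univ.filter (fun i => t < v i)).card ≤
      ⌊(n : ℝ)*δ*(1 - α) / ((t - 1)*(2*α - δ*(1 - α)))⌋₊ := by
  have hα0 : 0 < α := by linarith
  set s := δ * ((1 - α) / (2 * α)) with hs_def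
  have hs1 : s < 1 := by
    rw [hs_def, ← mul_div_assoc, div_lt_one (by positivity)]
    nlinarith
  have hB0 : ∀ i j, 0 ≤ (δ • W) i j := fun i j => by
    rw [hW, Matrix.smul_apply, Matrix.smul_apply, smul_eq_mul, smul_eq_mul]
    exact mul_nonneg hδ0 (mul_nonneg (div_nonneg (by linarith) (by linarith)) (hG0 i j))
  have hrow : ∀ i, ∑ j, (δ • W) i j = s := fun i => by
    simp only [hW, Matrix.smul_apply, smul_eq_mul, ← Finset.mul_sum, hG1 i, mul_one, ← hs_def]
  have hfix : v = 1 + v ᵥ* (δ • W) :=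
    eq_one_add_vecMul_of_eq_inv_mulVec
      (det_one_sub_transpose_ne_zero hB0 fun i => (hrow i).trans_lt hs1)
      (by rwa [transpose_smul])
  have hv1 : 1 ≤ v := one_le_of_eq_one_add_vecMul hB0 (fun i => (hrow i).le.trans hs1.le) hfix
  have hexcess := sum_sub_one_eq_of_eq_one_add_vecMul hrow hs1.ne hfix
  have hmarkov := Finset.card_filter_lt_mul_le_sum Finset.univ (fun i => v i - 1) (t - 1)
    fun i _ => sub_nonneg.mpr (hv1 i)
  simp only [sub_lt_sub_iff_right, Fintype.card_fin] at hmarkov hexcess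
  have hbound : (n : ℝ) * δ * (1 - α) / ((t - 1) * (2 * α - δ * (1 - α)))
      = n * s / (1 - s) / (t - 1) := by
    have hden : 0 < 2 * α - δ * (1 - α) := by nlinarith
    rw [hs_def]
    field_simp
  apply Nat.le_floor
  rw [hbound, le_div_iff₀ (sub_pos.mpr ht)]
  exact hmarkov.trans_eq hexcess
end

section
/- Suppose v_l < v_c^a < v̄, where v_l, v̄, v_h are respectively the leaf centrality of the star graph, the balanced-graph centrality, and the star-center centrality. Then in the star graph exactly one agent has centrality above v_c^a, while in any balanced graph all n agents have centrality above v_c^a; hence the balanced graph's seeding capacity ‖S^max‖₁ exceeds the star graph's seeding capacity S^max_center whenever the demand capacities S^max_i are positive for at least two agents. -/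
/-!
For a row-stochastic `G` and `|β| < 1` the matrix `1 - β Gᵀ` is strictly diagonally dominant
(column by column), so by Gershgorin it is invertible and the centrality `(1 - β Gᵀ)⁻¹ 1` is the
unique solution `v` of `v - β Gᵀ v = 1`. For a column-stochastic `G` the constant vector
`(1 - β)⁻¹ = v̄` solves it; for the star graph the vector equal to `v_h` at the center and `v_l`
at the leaves does. As `v_l < v_c^a < v̄ ≤ v_h`, only the center clears the threshold in the star,
every agent clears it in a balanced graph, and the balanced seeding capacity contains, besides
`S_c`, the positive capacity of some other agent.
-/

open Matrix Finset

noncomputable section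

variable {ι : Type*} [Fintype ι] [DecidableEq ι] {G : Matrix ι ι ℝ} {β : ℝ}

def bonacichCentrality (β : ℝ) (G : Matrix ι ι ℝ) : ι → ℝ :=
  (1 - β • Gᵀ)⁻¹ *ᵥ 1

theorem one_sub_smul_transpose_mulVec_apply (β : ℝ) (G : Matrix ι ι ℝ) (v : ι → ℝ) (i : ι) :
    ((1 - β • Gᵀ) *ᵥ v) i = v i - β * ∑ j, G j i * v j := by
  rw [sub_mulVec, one_mulVec, smul_mulVec, Pi.sub_apply, Pi.smul_apply, smul_eq_mul]
  simp [mulVec, dotProduct]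

theorem det_one_sub_smul_transpose_ne_zero_s18 (hG : G ∈ rowStochastic ℝ ι) (hβ : |β| < 1) :
    (1 - β • Gᵀ).det ≠ 0 := by
  refine det_ne_zero_of_sum_col_lt_diag fun k => ?_
  have hoff : ∀ i ∈ univ.erase k, ‖(1 - β • Gᵀ) i k‖ = |β| * G k i := fun i hi => by
    simp [one_apply_ne (ne_of_mem_erase hi), abs_of_nonneg (hG.1 k i)]
  have hGkk : G k k ≤ 1 := le_one_of_mem_rowStochastic hG
  have hβGkk : β * G k k ≤ |β| * G k k := mul_le_mul_of_nonneg_right (le_abs_self β) (hG.1 k k)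
  calc ∑ i ∈ univ.erase k, ‖(1 - β • Gᵀ) i k‖ = |β| * (1 - G k k) := by
        rw [sum_congr rfl hoff, ← mul_sum, sum_erase_eq_sub (mem_univ k),
          sum_row_of_mem_rowStochastic hG]
    _ < 1 - β * G k k := by linarith [mul_sub |β| 1 (G k k)]
    _ ≤ ‖(1 - β • Gᵀ) k k‖ := by simpa using le_abs_self (1 - β * G k k)

theorem bonacichCentrality_eq_of_mulVec (hG : G ∈ rowStochastic ℝ ι) (hβ : |β| < 1)
    {v : ι → ℝ} (hv : (1 - β • Gᵀ) *ᵥ v = 1) : bonacichCentrality β G = v := by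
  rw [bonacichCentrality, ← hv, mulVec_mulVec,
    nonsing_inv_mul _ (det_one_sub_smul_transpose_ne_zero_s18 hG hβ).isUnit, one_mulVec]

theorem bonacichCentrality_of_colStochastic (hGr : G ∈ rowStochastic ℝ ι)
    (hGc : G ∈ colStochastic ℝ ι) (hβ : |β| < 1) :
    bonacichCentrality β G = fun _ => (1 - β)⁻¹ := by
  refine bonacichCentrality_eq_of_mulVec hGr hβ ?_
  have hβ1 : 1 - β ≠ 0 := by linarith [le_abs_self β]
  have hGt : Gᵀ *ᵥ 1 = 1 :=
    one_vecMul_of_mem_rowStochastic (transpose_mem_rowStochastic_iff_mem_colStochastic.2 hGc)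
  rw [show (fun _ => (1 - β)⁻¹ : ι → ℝ) = (1 - β)⁻¹ • 1 by ext; simp]
  rw [mulVec_smul, sub_mulVec, one_mulVec, smul_mulVec, hGt]
  ext
  simp [field]

def starGraph (c : ι) : Matrix ι ι ℝ :=
  of fun i j => if i = c then (if j = c then 0 else 1 / ((Fintype.card ι : ℝ) - 1))
    else (if j = c then 1 else 0)

def starCenterCentrality (β : ℝ) (n : ℕ) : ℝ := (1 + β * ((n : ℝ) - 1)) / (1 - β ^ 2)

def starLeafCentrality (β : ℝ) (n : ℕ) : ℝ := (1 + β / ((n : ℝ) - 1)) / (1 - β ^ 2)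

omit [DecidableEq ι] in
theorem one_lt_card_real [Nontrivial ι] : (1 : ℝ) < Fintype.card ι := by
  exact_mod_cast Fintype.one_lt_card

theorem sum_ite_eq_zero_else_const (c : ι) (x : ℝ) :
    ∑ j, (if j = c then 0 else x) = ((Fintype.card ι : ℝ) - 1) * x := by
  rw [sum_ite, sum_const_zero, zero_add, sum_const, filter_ne', card_erase_of_mem (mem_univ c),
    card_univ, nsmul_eq_mul, Nat.cast_pred (Fintype.card_pos_iff.2 ⟨c⟩)]

theorem starGraph_mem_rowStochastic [Nontrivial ι] (c : ι) :
    starGraph c ∈ rowStochastic ℝ ι := by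
  have hn : 0 < (Fintype.card ι : ℝ) - 1 := sub_pos.2 one_lt_card_real
  refine mem_rowStochastic_iff_sum.2 ⟨fun i j => ?_, fun i => ?_⟩
  · have : (0 : ℝ) ≤ 1 / ((Fintype.card ι : ℝ) - 1) := by positivity
    simp only [starGraph, of_apply]
    split_ifs <;> first | exact this | norm_num
  · by_cases hi : i = c
    · simp only [starGraph, of_apply, hi, if_true]
      rw [sum_ite_eq_zero_else_const, mul_one_div_cancel hn.ne']
    · simp [starGraph, hi]

theorem bonacichCentrality_starGraph [Nontrivial ι] (c : ι) (hβ : |β| < 1) :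
    bonacichCentrality β (starGraph c) = fun i => if i = c then
      starCenterCentrality β (Fintype.card ι) else starLeafCentrality β (Fintype.card ι) := by
  have hm : (Fintype.card ι : ℝ) - 1 ≠ 0 := (sub_pos.2 one_lt_card_real).ne'
  have hβ2 : 1 - β ^ 2 ≠ 0 := (sub_pos.2 ((sq_lt_one_iff_abs_lt_one β).2 hβ)).ne'
  refine bonacichCentrality_eq_of_mulVec (starGraph_mem_rowStochastic c) hβ (funext fun i => ?_)
  rw [one_sub_smul_transpose_mulVec_apply, Pi.one_apply]
  set vh := starCenterCentrality β (Fintype.card ι)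
  set vl := starLeafCentrality β (Fintype.card ι)
  by_cases hi : i = c
  · have hcol : ∀ j, starGraph c j c * (if j = c then vh else vl) = if j = c then 0 else vl :=
      fun j => by by_cases hj : j = c <;> simp [starGraph, hj]
    simp only [hi, hcol, if_true, sum_ite_eq_zero_else_const]
    simp only [vh, vl, starCenterCentrality, starLeafCentrality]
    field_simp
    ring
  · have hcol : ∀ j, starGraph c j i * (if j = c then vh else vl) =
        if j = c then vh / ((Fintype.card ι : ℝ) - 1) else 0 :=
      fun j => by by_cases hj : j = c <;> simp [starGraph, hj, hi, div_eq_inv_mul]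
    simp only [hi, hcol, if_false, sum_ite_eq', mem_univ, if_true]
    simp only [vh, vl, starCenterCentrality, starLeafCentrality]
    field_simp
    ring

theorem inv_one_sub_le_starCenterCentrality (hβ0 : 0 ≤ β) (hβ1 : β < 1) {n : ℕ}
    (hn : 2 ≤ n) : (1 - β)⁻¹ ≤ starCenterCentrality β n := by
  have hn' : (1 : ℝ) ≤ (n : ℝ) - 1 := by
    have : (2 : ℝ) ≤ n := by exact_mod_cast hn
    linarith
  have hβ2 : 0 < 1 - β ^ 2 := by nlinarith
  have hβ1' : 1 - β ≠ 0 := by linarith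
  rw [show (1 - β)⁻¹ = (1 + β) / (1 - β ^ 2) by field_simp; ring, starCenterCentrality]
  gcongr
  exact le_mul_of_one_le_right hβ0 hn'

theorem discount_mem_Ioo {α δ : ℝ} (hα : 1 / 2 ≤ α) (hα1 : α < 1) (hδ0 : 0 < δ) (hδ1 : δ < 1) :
    δ * ((1 - α) / (2 * α)) ∈ Set.Ioo 0 1 := by
  have hpos : 0 < (1 - α) / (2 * α) := div_pos (by linarith) (by linarith)
  have hle : (1 - α) / (2 * α) ≤ 1 := (div_le_one (by linarith)).2 (by linarith)
  exact ⟨mul_pos hδ0 hpos, by nlinarith⟩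

end

/-- When `v_l < v_c^a < v̄`, exactly the center can be seeded in the star graph,
all agents can be seeded in a balanced graph, and the balanced graph's seeding
capacity exceeds the star graph's one. -/
theorem stmt_18 (n : ℕ) (hn : 2 ≤ n) (α δ : ℝ) (hα : 1/2 ≤ α) (hα1 : α < 1)
    (hδ0 : 0 < δ) (hδ1 : δ < 1)
    (vl vbar : ℝ)
    (hvl : vl = (1 + δ*(1 - α)/(2*α*((n : ℝ) - 1))) / (1 - (δ*(1 - α)/(2*α))^2))
    (hvbar : vbar = 2*α / (2*α - δ*(1 - α)))
    (vca : ℝ) (h1 : vl < vca) (h2 : vca < vbar)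
    -- the star graph with center `c`
    (c : Fin n) (Gstar : Matrix (Fin n) (Fin n) ℝ)
    (hGstar : ∀ i j, Gstar i j =
      if i = c then (if j = c then 0 else 1/((n : ℝ) - 1))
      else (if j = c then 1 else 0))
    (vstar : Fin n → ℝ)
    (hvstar : vstar = (1 - δ • (((1 - α)/(2*α)) • Gstar)ᵀ)⁻¹ *ᵥ (fun _ => 1))
    -- an arbitrary balanced (doubly stochastic) graph
    (Gbal : Matrix (Fin n) (Fin n) ℝ)
    (hGbal0 : ∀ i j, 0 ≤ Gbal i j) (hGbalr : ∀ i, ∑ j, Gbal i j = 1)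
    (hGbalc : ∀ j, ∑ i, Gbal i j = 1)
    (vbal : Fin n → ℝ)
    (hvbal : vbal = (1 - δ • (((1 - α)/(2*α)) • Gbal)ᵀ)⁻¹ *ᵥ (fun _ => 1))
    -- positive demand capacities
    (S : Fin n → ℝ) (hS : ∀ i, 0 < S i) :
    (∀ i, vca < vstar i ↔ i = c) ∧ (∀ i, vca < vbal i) ∧ S c < ∑ i, S i := by
  have : Nontrivial (Fin n) := Fin.nontrivial_iff_two_le.2 hn
  set β := δ * ((1 - α) / (2 * α)) with hβ
  obtain ⟨hβ0, hβ1⟩ : β ∈ Set.Ioo 0 1 := discount_mem_Ioo hα hα1 hδ0 hδ1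
  have hβabs : |β| < 1 := abs_lt.2 ⟨by linarith, hβ1⟩
  have hvl' : vl = starLeafCentrality β n := by
    rw [hvl, starLeafCentrality, hβ]
    field_simp
  have hvbar' : vbar = (1 - β)⁻¹ := by
    have : 2 * α - δ * (1 - α) ≠ 0 := by nlinarith
    rw [hvbar, hβ]
    field_simp
  rw [transpose_smul, smul_smul, ← hβ] at hvstar hvbal
  change vstar = bonacichCentrality β Gstar at hvstar
  change vbal = bonacichCentrality β Gbal at hvbal
  have hGstar' : Gstar = starGraph c := by
    ext i j
    simp [hGstar, starGraph]
  rw [hGstar', bonacichCentrality_starGraph c hβabs, Fintype.card_fin] at hvstar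
  rw [bonacichCentrality_of_colStochastic (mem_rowStochastic_iff_sum.2 ⟨hGbal0, hGbalr⟩)
    (mem_colStochastic_iff_sum.2 ⟨hGbal0, hGbalc⟩) hβabs] at hvbal
  have hvh := inv_one_sub_le_starCenterCentrality hβ0.le hβ1 hn
  refine ⟨fun i => ?_, fun i => ?_, ?_⟩
  · by_cases hi : i = c <;> simp only [hvstar, hi, if_true, if_false, iff_true, iff_false] <;>
      linarith
  · rwa [hvbal, ← hvbar']
  · obtain ⟨j, hj⟩ := exists_ne c
    exact single_lt_sum hj (mem_univ c) (mem_univ j) (hS j) fun k _ _ => (hS k).le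
end
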